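/- arXiv:2006.13397 — 3 statements merged into one kernel-verified Lean document; each statement's English description precedes it below -/
import Mathlib

section
/- Suppose {v_1, ..., v_g} is a Z-basis for a lattice Lambda in R^d (a free Z-submodule of rank g consisting of integer linear combinations of the v_i). Then there exists a Z-basis {f_1, ..., f_g} for Lambda with the property that f_i . f_j <= 0 for all i != j. -/
open Matrix

/-- Rounding lemma: for linearly independent `w` we can find an integer combination whose
dot products with each `w i` are at least any prescribed bounds. -/
lemma sum_smul_dotProduct {d : ℕ} {ι : Type*} [Fintype ι] (a : ι → ℝ) (w : ι → (Fin d → ℝ))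
    (u : Fin d → ℝ) : (∑ j, a j • w j) ⬝ᵥ u = ∑ j, a j * (w j ⬝ᵥ u) := by
  simp only [dotProduct, Finset.sum_apply, Pi.smul_apply, smul_eq_mul, Finset.sum_mul,
    Finset.mul_sum]
  rw [Finset.sum_comm]
  exact Finset.sum_congr rfl fun _ _ => Finset.sum_congr rfl fun _ _ => by ring

lemma exists_int_combo {d : ℕ} {ι : Type*} [Fintype ι] (w : ι → (Fin d → ℝ))
    (hw : LinearIndependent ℝ w) (b : ι → ℝ) :
    ∃ c : ι → ℤ, ∀ i, b i ≤ (∑ j, (c j : ℝ) • w j) ⬝ᵥ w i := by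
  classical
  set T : (ι → ℝ) →ₗ[ℝ] (ι → ℝ) :=
    { toFun := fun x => fun i => (∑ j, x j • w j) ⬝ᵥ w i
      map_add' := by
        intro x y; funext i
        simp [Pi.add_apply, add_smul, Finset.sum_add_distrib, add_dotProduct]
      map_smul' := by
        intro r x; funext i
        simp only [RingHom.id_apply, Pi.smul_apply, smul_eq_mul]
        rw [sum_smul_dotProduct, sum_smul_dotProduct, Finset.mul_sum]
        exact Finset.sum_congr rfl fun _ _ => by ring } with hTdef
  have hT : ∀ x i, T x i = (∑ j, x j • w j) ⬝ᵥ w i := fun x i => rfl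
  have hinj : Function.Injective T := by
    rw [← LinearMap.ker_eq_bot, LinearMap.ker_eq_bot']
    intro x hx
    set s := ∑ j, x j • w j with hs
    have h0 : ∀ i, s ⬝ᵥ w i = 0 := fun i => congrFun hx i
    have hss : s ⬝ᵥ s = 0 := by
      rw [hs, sum_smul_dotProduct]
      apply Finset.sum_eq_zero
      intro j _
      rw [dotProduct_comm, h0 j, mul_zero]
    have hs0 : s = 0 := dotProduct_self_eq_zero.mp hss
    have := Fintype.linearIndependent_iff.mp hw x (by rw [← hs, hs0])
    funext i; exact this i
  have hsurj : Function.Surjective T := (LinearMap.injective_iff_surjective).mp hinj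
  set B : ℝ := ∑ i : ι, ∑ j : ι, |w j ⬝ᵥ w i| with hB
  obtain ⟨x, hx⟩ := hsurj (fun i => b i + B)
  refine ⟨fun j => ⌈x j⌉, fun i => ?_⟩
  set δ : ι → ℝ := fun j => (⌈x j⌉ : ℝ) - x j with hδ
  have hδ0 : ∀ j, 0 ≤ δ j := fun j => by simp [hδ, Int.le_ceil]
  have hδ1 : ∀ j, δ j ≤ 1 := fun j => by
    have := (Int.ceil_lt_add_one (x j)).le
    simp [hδ]; linarith
  have hxc : (fun j => (⌈x j⌉ : ℝ)) = x + δ := by funext j; simp [hδ]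
  have hTδ : -B ≤ T δ i := by
    rw [hT, sum_smul_dotProduct]
    have h1 : ∀ j ∈ Finset.univ, -|w j ⬝ᵥ w i| ≤ δ j * (w j ⬝ᵥ w i) := by
      intro j _
      have h2 : 0 ≤ (w j ⬝ᵥ w i) + |w j ⬝ᵥ w i| := by
        have := neg_abs_le (w j ⬝ᵥ w i); linarith
      nlinarith [hδ0 j, hδ1 j, abs_nonneg (w j ⬝ᵥ w i)]
    have h3 : ∑ j, -|w j ⬝ᵥ w i| ≤ ∑ j, δ j * (w j ⬝ᵥ w i) := Finset.sum_le_sum h1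
    have h4 : ∑ j : ι, |w j ⬝ᵥ w i| ≤ B := by
      rw [hB]
      exact Finset.single_le_sum (f := fun i => ∑ j : ι, |w j ⬝ᵥ w i|)
        (fun i _ => Finset.sum_nonneg fun j _ => abs_nonneg _) (Finset.mem_univ i)
    rw [Finset.sum_neg_distrib] at h3
    linarith
  have : (∑ j, ((⌈x j⌉ : ℤ) : ℝ) • w j) ⬝ᵥ w i = T (fun j => (⌈x j⌉ : ℝ)) i := rfl
  rw [this, hxc, map_add]
  have := congrFun hx i
  simp only [Pi.add_apply]
  rw [this]
  linarith

lemma key_induction (d g : ℕ) (v : Fin g → (Fin d → ℝ)) (hv : LinearIndependent ℝ v) (k : ℕ) :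
    ∃ f : Fin g → (Fin d → ℝ),
      LinearIndependent ℝ f ∧
      Submodule.span ℤ (Set.range f) = Submodule.span ℤ (Set.range v) ∧
      ∀ i j : Fin g, i ≠ j → i.val < k → j.val < k → f i ⬝ᵥ f j ≤ 0 := by
  classical
  induction k with
  | zero => exact ⟨v, hv, rfl, fun i j _ hi _ => absurd hi (Nat.not_lt_zero _)⟩
  | succ k ih =>
    obtain ⟨f, hf, hsp, hcond⟩ := ih
    by_cases hk : k < g
    · set K : Fin g := ⟨k, hk⟩ with hK
      obtain ⟨c, hc⟩ := exists_int_combo (fun j : {j : Fin g // j ≠ K} => f j.1)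
        (hf.comp Subtype.val Subtype.val_injective) (fun i => f K ⬝ᵥ f i.1)
      set u : Fin d → ℝ := ∑ j : {j : Fin g // j ≠ K}, ((c j : ℝ)) • f j.1 with hu
      set f' := Function.update f K (f K - u) with hf'
      have hne : ∀ j, j ≠ K → f' j = f j := fun j hj => Function.update_of_ne hj _ _
      have hKval : f' K = f K - u := Function.update_self _ _ _
      have humem : ∀ (S : Submodule ℤ (Fin d → ℝ)),
          (∀ j : {j : Fin g // j ≠ K}, f j.1 ∈ S) → u ∈ S := by
        intro S hS
        rw [hu]
        exact Submodule.sum_mem _ fun j _ => by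
          rw [Int.cast_smul_eq_zsmul]; exact Submodule.smul_mem _ _ (hS j)
      have hspan' : Submodule.span ℤ (Set.range f') = Submodule.span ℤ (Set.range f) := by
        apply le_antisymm
        · rw [Submodule.span_le]
          rintro _ ⟨j, rfl⟩
          by_cases hj : j = K
          · subst hj
            rw [hKval]
            exact sub_mem (Submodule.subset_span (Set.mem_range_self _))
              (humem _ fun j => Submodule.subset_span (Set.mem_range_self _))
          · rw [hne j hj]; exact Submodule.subset_span (Set.mem_range_self _)
        · rw [Submodule.span_le]
          rintro _ ⟨j, rfl⟩
          by_cases hj : j = K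
          · subst hj
            have hKeq : f K = f' K + u := by rw [hKval]; abel
            rw [hKeq]
            exact add_mem (Submodule.subset_span (Set.mem_range_self _))
              (humem _ fun j => by
                rw [← hne j.1 j.2]; exact Submodule.subset_span (Set.mem_range_self _))
          · rw [← hne j hj]; exact Submodule.subset_span (Set.mem_range_self _)
      have hli' : LinearIndependent ℝ f' := by
        have hsR : Submodule.span ℝ (Set.range f') = Submodule.span ℝ (Set.range f) := by
          rw [← Submodule.span_span_of_tower ℤ ℝ (Set.range f'), hspan',
            Submodule.span_span_of_tower]
        rw [linearIndependent_iff_card_eq_finrank_span] at hf ⊢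
        unfold Set.finrank at hf ⊢
        rw [hsR]; exact hf
      have hdot : ∀ j, j ≠ K → f' K ⬝ᵥ f' j ≤ 0 := by
        intro j hj
        rw [hKval, hne j hj, sub_dotProduct]
        have h := hc ⟨j, hj⟩
        simp only at h
        linarith
      refine ⟨f', hli', hspan'.trans hsp, ?_⟩
      intro i j hij hi hj
      rcases Nat.lt_succ_iff_lt_or_eq.mp hi with hi' | hi'
      · rcases Nat.lt_succ_iff_lt_or_eq.mp hj with hj' | hj'
        · have hiK : i ≠ K := fun h => by rw [h] at hi'; exact absurd hi' (lt_irrefl _)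
          have hjK : j ≠ K := fun h => by rw [h] at hj'; exact absurd hj' (lt_irrefl _)
          rw [hne i hiK, hne j hjK]; exact hcond i j hij hi' hj'
        · have hjK : j = K := Fin.ext hj'
          subst hjK
          rw [dotProduct_comm]
          exact hdot i hij
      · have hiK : i = K := Fin.ext hi'
        subst hiK
        exact hdot j (Ne.symm hij)
    · exact ⟨f, hf, hsp, fun i j hij _ _ =>
        hcond i j hij (lt_of_lt_of_le i.isLt (not_lt.mp hk))
          (lt_of_lt_of_le j.isLt (not_lt.mp hk))⟩

open Matrix

/-- Any lattice `Λ ⊆ ℝ^d` with `ℤ`-basis `v₁, …, v_g` admits a `ℤ`-basis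
`f₁, …, f_g` with pairwise nonpositive inner products. -/
theorem stmt_1 (d g : ℕ) (v : Fin g → (Fin d → ℝ)) (hv : LinearIndependent ℝ v) :
    ∃ f : Fin g → (Fin d → ℝ),
      LinearIndependent ℤ f ∧
      Submodule.span ℤ (Set.range f) = Submodule.span ℤ (Set.range v) ∧
      ∀ i j, i ≠ j → f i ⬝ᵥ f j ≤ 0 := by
  obtain ⟨f, hf, hsp, hcond⟩ := key_induction d g v hv g
  refine ⟨f, hf.restrict_scalars ?_, hsp, fun i j hij => hcond i j hij i.isLt j.isLt⟩
  intro a b hab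
  simpa using hab
end

section
/- Let F and C be orthogonal complementary rational subspaces of R^m, and let Flow = Z^m ∩ F and Cut = Z^m ∩ C. Then Cut^#/Cut is isomorphic to Flow^#/Flow, and both are isomorphic to Z^m/(Cut ⊕ Flow). -/
open Matrix

/-- The integer vectors of `ℝ^m`, as a `ℤ`-submodule. -/
def intVecs (m : ℕ) : Submodule ℤ (Fin m → ℝ) where
  carrier := {x | ∀ i, ∃ k : ℤ, x i = (k : ℝ)}
  add_mem' := by
    intro a b ha hb i
    obtain ⟨p, hp⟩ := ha i
    obtain ⟨q, hq⟩ := hb i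
    exact ⟨p + q, by simp [hp, hq]⟩
  zero_mem' := fun i => ⟨0, by simp⟩
  smul_mem' := by
    intro c a ha i
    obtain ⟨p, hp⟩ := ha i
    exact ⟨c * p, by simp [hp, zsmul_eq_mul]⟩

/-- The dual lattice of a lattice `Λ` (a `ℤ`-submodule of `ℝ^m`) inside the subspace
`V` (the `ℝ`-span of `Λ`): all `x ∈ V` pairing integrally with `Λ`. -/
def dualLattice (m : ℕ) (V : Submodule ℝ (Fin m → ℝ)) (Λ : Submodule ℤ (Fin m → ℝ)) :
    Submodule ℤ (Fin m → ℝ) where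
  carrier := {x | x ∈ V ∧ ∀ y ∈ Λ, ∃ k : ℤ, x ⬝ᵥ y = (k : ℝ)}
  add_mem' := by
    rintro a b ⟨haV, ha⟩ ⟨hbV, hb⟩
    refine ⟨V.add_mem haV hbV, fun y hy => ?_⟩
    obtain ⟨p, hp⟩ := ha y hy
    obtain ⟨q, hq⟩ := hb y hy
    exact ⟨p + q, by rw [add_dotProduct, hp, hq]; push_cast; ring⟩
  zero_mem' := ⟨V.zero_mem, fun y _ => ⟨0, by simp⟩⟩
  smul_mem' := by
    rintro c a ⟨haV, ha⟩
    have hca : c • a = (c : ℝ) • a := (Int.cast_smul_eq_zsmul ℝ c a).symm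
    refine ⟨by rw [hca]; exact V.smul_mem _ haV, fun y hy => ?_⟩
    obtain ⟨p, hp⟩ := ha y hy
    exact ⟨c * p, by rw [hca, smul_dotProduct, smul_eq_mul, hp]; push_cast; ring⟩

/-!
Let `π` be the projection onto `C` along `F = C^⊥`. For `z ∈ Cut` we have `⟪π x, z⟫ = ⟪x, z⟫`, so
`π` maps `ℤ^m` into `Cut^#`. It maps onto `Cut^#`: since `ℤ^m / Cut` is torsion free, `Cut` is a
direct summand of `ℤ^m`, so for `y ∈ Cut^#` the integral functional `⟪y, ·⟫` on `Cut` is `⟪x, ·⟫`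
for some `x ∈ ℤ^m`; then `π x - y ∈ C` is orthogonal to `Cut`, which spans `C` because `C` is
rational, hence `π x = y`. Finally, for `x ∈ ℤ^m`, `π x ∈ Cut` iff `x ∈ Cut ⊕ Flow` (then
`x - π x ∈ F` is integral). This gives `ℤ^m / (Cut ⊕ Flow) ≃ Cut^# / Cut`, and by symmetry also
`≃ Flow^# / Flow`.
-/

lemma Submodule.exists_retraction_of_projective_quotient {R M : Type*} [Ring R]
    [AddCommGroup M] [Module R M] (N : Submodule R M) [Module.Projective R (M ⧸ N)] :
    ∃ P : M →ₗ[R] M, (∀ x, P x ∈ N) ∧ ∀ x ∈ N, P x = x := by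
  obtain ⟨s, hs⟩ := Module.projective_lifting_property N.mkQ LinearMap.id N.mkQ_surjective
  refine ⟨LinearMap.id - s ∘ₗ N.mkQ, fun x => ?_, fun x hx => ?_⟩
  · rw [← Submodule.Quotient.mk_eq_zero, ← N.mkQ_apply, LinearMap.sub_apply, map_sub,
      LinearMap.comp_apply, ← LinearMap.comp_apply N.mkQ s, hs]
    simp
  · simp [(Submodule.Quotient.mk_eq_zero N).2 hx]

section Lattice

variable {m : ℕ}

def latticePoints (V : Submodule ℝ (Fin m → ℝ)) : Submodule ℤ (Fin m → ℝ) :=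
  intVecs m ⊓ V.restrictScalars ℤ

def IsRationalSubspace (V : Submodule ℝ (Fin m → ℝ)) : Prop :=
  ∃ s : Set (Fin m → ℝ), (∀ x ∈ s, ∀ i, ∃ q : ℚ, x i = (q : ℝ)) ∧ Submodule.span ℝ s = V

abbrev discriminantGroup (V : Submodule ℝ (Fin m → ℝ)) : Type :=
  dualLattice m V (latticePoints V) ⧸
    (latticePoints V).comap (dualLattice m V (latticePoints V)).subtype

variable (m) in
def intCastVec : (Fin m → ℤ) →ₗ[ℤ] (Fin m → ℝ) :=
  (Int.castAddHom ℝ).toIntLinearMap.compLeft (Fin m)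

@[simp]
lemma intCastVec_apply (a : Fin m → ℤ) (i : Fin m) : intCastVec m a i = a i := rfl

lemma intCastVec_mem_intVecs (a : Fin m → ℤ) : intCastVec m a ∈ intVecs m :=
  fun i => ⟨a i, rfl⟩

lemma exists_intCastVec_eq {x : Fin m → ℝ} (hx : x ∈ intVecs m) :
    ∃ a, intCastVec m a = x := by
  choose a ha using hx
  exact ⟨a, funext fun i => (ha i).symm⟩

lemma exists_dotProduct_eq_intCast {x y : Fin m → ℝ} (hx : x ∈ intVecs m)
    (hy : y ∈ intVecs m) :
    ∃ k : ℤ, x ⬝ᵥ y = k := by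
  obtain ⟨a, rfl⟩ := exists_intCastVec_eq hx
  obtain ⟨b, rfl⟩ := exists_intCastVec_eq hy
  exact ⟨a ⬝ᵥ b, by simp [dotProduct]⟩

lemma exists_mem_intVecs_apply_eq_dotProduct (ψ : (Fin m → ℤ) →ₗ[ℤ] ℝ)
    (hψ : ∀ a, ∃ k : ℤ, ψ a = k) : ∃ x ∈ intVecs m, ∀ a, ψ a = x ⬝ᵥ intCastVec m a := by
  choose k hk using fun i : Fin m => hψ fun j => if i = j then 1 else 0
  refine ⟨intCastVec m k, intCastVec_mem_intVecs k, fun a => ?_⟩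
  rw [LinearMap.pi_apply_eq_sum_univ ψ a, dotProduct]
  refine Finset.sum_congr rfl fun i _ => ?_
  simp [hk, mul_comm]

instance isTorsionFree_quotient_comap_latticePoints (V : Submodule ℝ (Fin m → ℝ)) :
    Module.IsTorsionFree ℤ ((Fin m → ℤ) ⧸ (latticePoints V).comap (intCastVec m)) := by
  refine .of_smul_eq_zero fun r q hrq => ?_
  induction q using Submodule.Quotient.induction_on with | H a => ?_
  rw [← Submodule.Quotient.mk_smul, Submodule.Quotient.mk_eq_zero] at hrq
  rw [Submodule.Quotient.mk_eq_zero, or_iff_not_imp_left]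
  intro hr
  refine ⟨intCastVec_mem_intVecs a, ?_⟩
  have hrV : (r : ℝ) • intCastVec m a ∈ V := by
    rw [Int.cast_smul_eq_zsmul, ← map_smul]
    exact hrq.2
  simpa [hr] using V.smul_mem (r : ℝ)⁻¹ hrV

lemma exists_mem_intVecs_dotProduct_eq_on_latticePoints (V : Submodule ℝ (Fin m → ℝ))
    {y : Fin m → ℝ} (hy : ∀ z ∈ latticePoints V, ∃ k : ℤ, y ⬝ᵥ z = k) :
    ∃ x ∈ intVecs m, ∀ z ∈ latticePoints V, x ⬝ᵥ z = y ⬝ᵥ z := by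
  -- the quotient is finitely generated and torsion free over the PID `ℤ`, so free, so projective
  obtain ⟨P, hPmem, hPid⟩ :=
    ((latticePoints V).comap (intCastVec m)).exists_retraction_of_projective_quotient
  obtain ⟨x, hx, hψ⟩ := exists_mem_intVecs_apply_eq_dotProduct
    (dotProductBilin ℤ ℤ y ∘ₗ intCastVec m ∘ₗ P) fun a => hy _ (hPmem a)
  refine ⟨x, hx, fun z hz => ?_⟩
  obtain ⟨b, rfl⟩ := exists_intCastVec_eq hz.1
  simpa [hPid b hz] using (hψ b).symm

lemma IsRationalSubspace.le_span_latticePoints {V : Submodule ℝ (Fin m → ℝ)}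
    (hV : IsRationalSubspace V) : V ≤ Submodule.span ℝ (latticePoints V : Set (Fin m → ℝ)) := by
  obtain ⟨s, hsrat, rfl⟩ := hV
  refine Submodule.span_le.2 fun x hx => ?_
  choose q hq using hsrat x hx
  obtain ⟨⟨b, hb⟩, hbq⟩ := IsLocalization.exist_integer_multiples_of_finite (nonZeroDivisors ℤ) q
  choose k hk using hbq
  have hb0 : (b : ℝ) ≠ 0 := by exact_mod_cast nonZeroDivisors.ne_zero hb
  have hbx : (b : ℝ) • x ∈ latticePoints (Submodule.span ℝ s) := by
    refine ⟨fun i => ⟨k i, ?_⟩, Submodule.smul_mem _ _ (Submodule.subset_span hx)⟩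
    rw [Pi.smul_apply, smul_eq_mul, hq i]
    exact_mod_cast (hk i).symm
  simpa [hb0] using Submodule.smul_mem _ (b : ℝ)⁻¹ (Submodule.subset_span hbx)

lemma IsRationalSubspace.eq_zero_of_forall_dotProduct_eq_zero {V : Submodule ℝ (Fin m → ℝ)}
    (hV : IsRationalSubspace V) {w : Fin m → ℝ} (hw : w ∈ V)
    (h : ∀ z ∈ latticePoints V, w ⬝ᵥ z = 0) : w = 0 := by
  have hspan : V ≤ LinearMap.ker (dotProductBilin ℝ ℝ w) :=
    hV.le_span_latticePoints.trans (Submodule.span_le.2 h)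
  exact dotProduct_self_eq_zero.1 (hspan hw)

end Lattice

section Projection

variable {m : ℕ} {F C : Submodule ℝ (Fin m → ℝ)}

lemma isCompl_of_forall_dotProduct_eq_zero (horth : ∀ x ∈ F, ∀ y ∈ C, x ⬝ᵥ y = 0)
    (hsup : F ⊔ C = ⊤) : IsCompl C F where
  disjoint := Submodule.disjoint_def.2 fun x hxC hxF =>
    dotProduct_self_eq_zero.1 (horth x hxF x hxC)
  codisjoint := codisjoint_iff.2 (by rw [sup_comm, hsup])

lemma projection_dotProduct_of_mem (hFC : IsCompl C F) (horth : ∀ x ∈ F, ∀ y ∈ C, x ⬝ᵥ y = 0)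
    (x : Fin m → ℝ) {y : Fin m → ℝ} (hy : y ∈ C) :
    C.projection F hFC x ⬝ᵥ y = x ⬝ᵥ y := by
  have h := horth _ (Submodule.sub_projection_mem hFC x) y hy
  rw [sub_dotProduct, sub_eq_zero] at h
  exact h.symm

lemma projection_mem_latticePoints_iff (hFC : IsCompl C F) {x : Fin m → ℝ}
    (hx : x ∈ intVecs m) :
    C.projection F hFC x ∈ latticePoints C ↔ x ∈ latticePoints C ⊔ latticePoints F := by
  constructor
  · intro hπx
    have hrest : x - C.projection F hFC x ∈ latticePoints F :=
      ⟨(intVecs m).sub_mem hx hπx.1, Submodule.sub_projection_mem hFC x⟩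
    simpa using Submodule.add_mem_sup hπx hrest
  · intro hxs
    obtain ⟨c, hc, f, hf, rfl⟩ := Submodule.mem_sup.1 hxs
    rwa [map_add, Submodule.projection_apply_of_mem_left hFC hc.2,
      Submodule.projection_apply_of_mem_right hFC hf.2, add_zero]

lemma dualLattice_latticePoints_eq_map (hFC : IsCompl C F)
    (horth : ∀ x ∈ F, ∀ y ∈ C, x ⬝ᵥ y = 0) (hC : IsRationalSubspace C) :
    dualLattice m C (latticePoints C) =
      (intVecs m).map ((C.projection F hFC).restrictScalars ℤ) := by
  ext y
  constructor
  · rintro ⟨hyC, hy⟩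
    obtain ⟨x, hx, hxy⟩ := exists_mem_intVecs_dotProduct_eq_on_latticePoints C hy
    refine ⟨x, hx, sub_eq_zero.1 (hC.eq_zero_of_forall_dotProduct_eq_zero
      (C.sub_mem (Submodule.projection_apply_mem hFC x) hyC) fun z hz => ?_)⟩
    rw [LinearMap.restrictScalars_apply, sub_dotProduct,
      projection_dotProduct_of_mem hFC horth x hz.2, hxy z hz, sub_self]
  · rintro ⟨x, hx, rfl⟩
    refine ⟨Submodule.projection_apply_mem hFC x, fun z hz => ?_⟩
    rw [LinearMap.restrictScalars_apply, projection_dotProduct_of_mem hFC horth x hz.2]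
    exact exists_dotProduct_eq_intCast hx hz.1

noncomputable def quotientEquivDiscriminantGroup (hFC : IsCompl C F)
    (horth : ∀ x ∈ F, ∀ y ∈ C, x ⬝ᵥ y = 0) (hC : IsRationalSubspace C) :
    (intVecs m ⧸ (latticePoints C ⊔ latticePoints F).comap (intVecs m).subtype) ≃ₗ[ℤ]
      discriminantGroup C :=
  have hdual := dualLattice_latticePoints_eq_map hFC horth hC
  let π : intVecs m →ₗ[ℤ] dualLattice m C (latticePoints C) :=
    ((C.projection F hFC).restrictScalars ℤ).restrict fun x hx => hdual ▸ ⟨x, hx, rfl⟩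
  let φ := Submodule.mkQ _ ∘ₗ π
  have hsurj : Function.Surjective φ := by
    refine (Submodule.mkQ_surjective _).comp fun ⟨y, hy⟩ => ?_
    obtain ⟨x, hx, rfl⟩ := hdual ▸ hy
    exact ⟨⟨x, hx⟩, rfl⟩
  have hker :
      LinearMap.ker φ = (latticePoints C ⊔ latticePoints F).comap (intVecs m).subtype := by
    ext ⟨x, hx⟩
    simp only [LinearMap.mem_ker, Submodule.mem_comap, Submodule.subtype_apply, φ,
      LinearMap.comp_apply, Submodule.mkQ_apply, Submodule.Quotient.mk_eq_zero]
    exact projection_mem_latticePoints_iff hFC hx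
  (Submodule.quotEquivOfEq _ _ hker.symm).trans (φ.quotKerEquivOfSurjective hsurj)

end Projection

/-- For orthogonal complementary rational subspaces `F, C ⊆ ℝ^m`, with
`Flow = ℤ^m ∩ F` and `Cut = ℤ^m ∩ C`, the determinant groups `Cut^♯/Cut` and
`Flow^♯/Flow` are isomorphic, and both are isomorphic to `ℤ^m/(Cut ⊕ Flow)`. -/
theorem stmt_9 (m : ℕ) (F C : Submodule ℝ (Fin m → ℝ))
    (hFrat : ∃ s : Set (Fin m → ℝ), (∀ x ∈ s, ∀ i, ∃ q : ℚ, x i = (q : ℝ)) ∧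
      Submodule.span ℝ s = F)
    (hCrat : ∃ s : Set (Fin m → ℝ), (∀ x ∈ s, ∀ i, ∃ q : ℚ, x i = (q : ℝ)) ∧
      Submodule.span ℝ s = C)
    (horth : ∀ x ∈ F, ∀ y ∈ C, x ⬝ᵥ y = 0)
    (hcompl : F ⊔ C = ⊤) :
    let Flow : Submodule ℤ (Fin m → ℝ) := intVecs m ⊓ F.restrictScalars ℤ
    let Cut : Submodule ℤ (Fin m → ℝ) := intVecs m ⊓ C.restrictScalars ℤ
    Nonempty
      ((↥(dualLattice m C Cut) ⧸ Cut.comap (dualLattice m C Cut).subtype) ≃+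
        (↥(dualLattice m F Flow) ⧸ Flow.comap (dualLattice m F Flow).subtype)) ∧
    Nonempty
      ((↥(dualLattice m C Cut) ⧸ Cut.comap (dualLattice m C Cut).subtype) ≃+
        (↥(intVecs m) ⧸ (Cut ⊔ Flow).comap (intVecs m).subtype)) := by
  intro Flow Cut
  have hCF : IsCompl C F := isCompl_of_forall_dotProduct_eq_zero horth hcompl
  have horth' : ∀ x ∈ C, ∀ y ∈ F, x ⬝ᵥ y = 0 := fun x hx y hy => by
    rw [dotProduct_comm]; exact horth y hy x hx
  let eC := quotientEquivDiscriminantGroup hCF horth hCrat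
  let eF := quotientEquivDiscriminantGroup hCF.symm horth' hFrat
  have hswap :
      (Cut ⊔ Flow).comap (intVecs m).subtype = (Flow ⊔ Cut).comap (intVecs m).subtype := by
    rw [sup_comm]
  exact ⟨⟨(eC.symm.trans ((Submodule.quotEquivOfEq _ _ hswap).trans eF)).toAddEquiv⟩,
    ⟨eC.symm.toAddEquiv⟩⟩
end

section
/- Let G be a connected simple graph with vertex set {0,...,n}, reduced incidence matrix ∂~ (incidence matrix with the row of vertex 0 deleted), and let iota be an integer matrix whose columns form a Z-basis of Flow(G) = Z^m ∩ ker ∂. Then the cokernels Z^n / im(∂~ ∂~^T) and Z^g / im(iota^T iota) are isomorphic as finite abelian groups, where g = m - n. -/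
/-!
With `∂̃` the reduced incidence matrix and `ι` the flow basis,
`0 → ℤ^g --ι--> ℤ^m --∂̃--> ℤ^n → 0` is exact: `∂̃` is onto because `G` is connected, and
`ker ∂̃ = ker ∂` because every column of `∂` sums to zero. As `ℤ^n` is free the sequence
splits, so its transpose `0 → ℤ^n --∂̃ᵀ--> ℤ^m --ιᵀ--> ℤ^g → 0` is split exact as well.
Pulling back along the surjections `∂̃` and `ιᵀ`, both cokernels become
`ℤ^m / (im ∂̃ᵀ + im ι)`.
-/

open Matrix

noncomputable def Submodule.quotientComapEquivOfSurjective {R M N : Type*} [Ring R]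
    [AddCommGroup M] [AddCommGroup N] [Module R M] [Module R N]
    (f : M →ₗ[R] N) (hf : Function.Surjective f) (P : Submodule R N) :
    (M ⧸ P.comap f) ≃ₗ[R] N ⧸ P :=
  (Submodule.quotEquivOfEq _ _ (by rw [LinearMap.ker_comp, Submodule.ker_mkQ])).trans
    ((P.mkQ ∘ₗ f).quotKerEquivOfSurjective (P.mkQ_surjective.comp hf))

theorem LinearMap.comap_range_comp {R M N : Type*} [Ring R]
    [AddCommGroup M] [AddCommGroup N] [Module R M] [Module R N]
    (f : M →ₗ[R] N) (h : N →ₗ[R] M) :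
    (LinearMap.range (f ∘ₗ h)).comap f = LinearMap.range h ⊔ LinearMap.ker f := by
  ext x
  simp only [Submodule.mem_comap, LinearMap.mem_range, Submodule.mem_sup, LinearMap.mem_ker,
    LinearMap.comp_apply]
  constructor
  · rintro ⟨y, hy⟩
    exact ⟨h y, ⟨y, rfl⟩, x - h y, by rw [map_sub, hy, sub_self], add_sub_cancel _ _⟩
  · rintro ⟨_, ⟨y, rfl⟩, z, hz, rfl⟩
    exact ⟨y, by rw [map_add, hz, add_zero]⟩

namespace Matrix

theorem exists_mul_eq_of_range_le {R n m g : Type*} [CommRing R] [Fintype m] [Fintype g]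
    [DecidableEq m] [DecidableEq g] {A : Matrix n m R} {P : Matrix n g R}
    (h : LinearMap.range (toLin' P) ≤ LinearMap.range (toLin' A)) :
    ∃ X : Matrix m g R, A * X = P := by
  choose y hy using fun j => h ⟨Pi.single j 1, rfl⟩
  refine ⟨of fun k j => y j k, ?_⟩
  ext i j
  have := congrFun (hy j) i
  rw [toLin'_apply, toLin'_apply, mulVec_single_one] at this
  rw [mul_apply, ← col_apply P, ← this]
  rfl

variable {R : Type*} [CommRing R] {n m g : Type*} [Fintype n] [Fintype m] [Fintype g]
  [DecidableEq n] [DecidableEq m] [DecidableEq g]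

/-- `0 → R^g --ι--> R^m --D--> R^n → 0`, split by the section `S` of `D` and the retraction
`T` of `ι`. -/
structure IsSplitExact (D : Matrix n m R) (ι : Matrix m g R) (S : Matrix m n R)
    (T : Matrix g m R) : Prop where
  mul_section : D * S = 1
  retraction_mul : T * ι = 1
  add_eq_one : ι * T + S * D = 1

namespace IsSplitExact

variable {D : Matrix n m R} {ι : Matrix m g R} {S : Matrix m n R} {T : Matrix g m R}

theorem transpose (h : IsSplitExact D ι S T) : IsSplitExact ιᵀ Dᵀ Tᵀ Sᵀ where
  mul_section := by rw [← transpose_mul, h.retraction_mul, transpose_one]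
  retraction_mul := by rw [← transpose_mul, h.mul_section, transpose_one]
  add_eq_one := by rw [← transpose_mul, ← transpose_mul, ← transpose_add, add_comm,
    h.add_eq_one, transpose_one]

theorem mul_eq_zero (h : IsSplitExact D ι S T) : D * ι = 0 := by
  have hDιT : D * ι * T = 0 := by
    have := congrArg (D * ·) h.add_eq_one
    simp only [Matrix.mul_add, Matrix.mul_one, ← Matrix.mul_assoc, h.mul_section,
      Matrix.one_mul, add_eq_right] at this
    exact this
  calc D * ι = D * ι * T * ι := by rw [Matrix.mul_assoc _ T, h.retraction_mul, Matrix.mul_one]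
    _ = 0 := by rw [hDιT, Matrix.zero_mul]

theorem ker_eq_range (h : IsSplitExact D ι S T) :
    LinearMap.ker (toLin' D) = LinearMap.range (toLin' ι) := by
  refine le_antisymm ?_ ?_
  · intro x hx
    rw [LinearMap.mem_ker, toLin'_apply] at hx
    refine ⟨T *ᵥ x, ?_⟩
    calc toLin' ι (T *ᵥ x) = (ι * T + S * D) *ᵥ x := by
          rw [add_mulVec, ← mulVec_mulVec x S, hx, mulVec_zero, add_zero, toLin'_apply,
            mulVec_mulVec]
      _ = x := by rw [h.add_eq_one, one_mulVec]
  · rw [LinearMap.range_le_ker_iff, ← toLin'_mul, h.mul_eq_zero, map_zero]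

theorem surjective (h : IsSplitExact D ι S T) : Function.Surjective (toLin' D) :=
  fun y => ⟨S *ᵥ y, by rw [toLin'_apply, mulVec_mulVec, h.mul_section, one_mulVec]⟩

theorem comap_range_mul_transpose (h : IsSplitExact D ι S T) :
    (LinearMap.range (toLin' (D * Dᵀ))).comap (toLin' D) =
      LinearMap.range (toLin' Dᵀ) ⊔ LinearMap.range (toLin' ι) := by
  rw [toLin'_mul, LinearMap.comap_range_comp, h.ker_eq_range]

noncomputable def cokernelEquiv (h : IsSplitExact D ι S T) :
    ((n → R) ⧸ LinearMap.range (toLin' (D * Dᵀ))) ≃ₗ[R]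
      (g → R) ⧸ LinearMap.range (toLin' (ιᵀ * ι)) := by
  have hDι := h.comap_range_mul_transpose
  have hιD := h.transpose.comap_range_mul_transpose
  rw [transpose_transpose, sup_comm] at hιD
  exact (Submodule.quotientComapEquivOfSurjective _ h.surjective _).symm.trans
    ((Submodule.quotEquivOfEq _ _ (hDι.trans hιD.symm)).trans
      (Submodule.quotientComapEquivOfSurjective _ h.transpose.surjective _))

end IsSplitExact

theorem exists_isSplitExact {D : Matrix n m R} {ι : Matrix m g R}
    (hD : Function.Surjective (toLin' D)) (hι : Function.Injective (toLin' ι))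
    (hexact : LinearMap.ker (toLin' D) = LinearMap.range (toLin' ι)) :
    ∃ S T, IsSplitExact D ι S T := by
  obtain ⟨S, hS⟩ : ∃ S : Matrix m n R, D * S = 1 :=
    exists_mul_eq_of_range_le (by rw [LinearMap.range_eq_top.2 hD]; exact le_top)
  obtain ⟨T, hT⟩ : ∃ T : Matrix g m R, ι * T = 1 - S * D := exists_mul_eq_of_range_le (by
    rw [← hexact, LinearMap.range_le_ker_iff, ← toLin'_mul, Matrix.mul_sub, Matrix.mul_one,
      ← Matrix.mul_assoc, hS, Matrix.one_mul, sub_self, map_zero])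
  have hDι : D * ι = 0 := by
    rw [← toLin'.injective.eq_iff, toLin'_mul, map_zero, ← LinearMap.range_le_ker_iff, hexact]
  have hιTι : ι * (T * ι) = ι * (1 : Matrix g g R) := by
    rw [← Matrix.mul_assoc, hT, Matrix.sub_mul, Matrix.mul_assoc, hDι, Matrix.mul_zero, sub_zero,
      Matrix.one_mul, Matrix.mul_one]
  refine ⟨S, T, hS, toLin'.injective (LinearMap.ext fun x => hι ?_), by rw [hT, sub_add_cancel]⟩
  simpa only [toLin'_apply, mulVec_mulVec] using congrArg (· *ᵥ x) hιTι

end Matrix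

section Incidence

def incidenceMatrix (R : Type*) [Ring R] {V E : Type*} [DecidableEq V] (head tail : E → V) :
    Matrix V E R :=
  of fun v k => if v = head k then 1 else if v = tail k then -1 else 0

variable {R V E : Type*} [CommRing R] [DecidableEq V] [Fintype E] [DecidableEq E]
  {head tail : E → V}

theorem incidenceMatrix_mulVec_single {k : E} (hk : head k ≠ tail k) :
    incidenceMatrix R head tail *ᵥ Pi.single k 1 = Pi.single (head k) 1 - Pi.single (tail k) 1 := by
  ext v
  rw [mulVec_single_one, col_apply, incidenceMatrix, of_apply, Pi.sub_apply, Pi.single_apply,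
    Pi.single_apply]
  split_ifs with h₁ h₂ <;> simp_all

theorem one_vecMul_incidenceMatrix [Fintype V] (h : ∀ k, head k ≠ tail k) :
    1 ᵥ* incidenceMatrix R head tail = 0 := by
  ext k
  change 1 ⬝ᵥ (incidenceMatrix R head tail).col k = 0
  rw [← mulVec_single_one, incidenceMatrix_mulVec_single (h k)]
  simp [dotProduct_sub]

theorem single_sub_single_mem_range_incidenceMatrix {G : SimpleGraph V}
    (hadj : ∀ k, G.Adj (head k) (tail k)) (hsurj : ∀ e ∈ G.edgeSet, ∃ k, s(head k, tail k) = e)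
    {v w : V} (hvw : G.Reachable v w) :
    Pi.single v 1 - Pi.single w 1 ∈ LinearMap.range (toLin' (incidenceMatrix R head tail)) := by
  set M := LinearMap.range (toLin' (incidenceMatrix R head tail))
  have hcol (k : E) : Pi.single (head k) 1 - Pi.single (tail k) 1 ∈ M :=
    ⟨Pi.single k 1, incidenceMatrix_mulVec_single (hadj k).ne⟩
  have hstep {u u' : V} (huu' : G.Adj u u') : Pi.single u 1 - Pi.single u' 1 ∈ M := by
    obtain ⟨k, hk⟩ := hsurj s(u, u') huu'
    rcases Sym2.eq_iff.1 hk with ⟨rfl, rfl⟩ | ⟨rfl, rfl⟩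
    · exact hcol k
    · simpa using M.neg_mem (hcol k)
  obtain ⟨p⟩ := hvw
  induction p with
  | nil => simp
  | cons huu' _ ih => simpa using M.add_mem (hstep huu') ih

end Incidence

section ReducedMatrix

variable {R m : Type*} [CommRing R] [Fintype m] {n : ℕ}

theorem submatrix_succ_mulVec (A : Matrix (Fin (n + 1)) m R) (x : m → R) :
    A.submatrix Fin.succ id *ᵥ x = (A *ᵥ x) ∘ Fin.succ := rfl

variable [DecidableEq m]

theorem ker_toLin'_submatrix_succ {A : Matrix (Fin (n + 1)) m R} (hA : 1 ᵥ* A = 0) :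
    LinearMap.ker (toLin' (A.submatrix Fin.succ id)) = LinearMap.ker (toLin' A) := by
  ext x
  simp only [LinearMap.mem_ker, toLin'_apply, submatrix_succ_mulVec]
  refine ⟨fun hx => ?_, fun hx => by rw [hx]; rfl⟩
  have hsum : ∑ v, (A *ᵥ x) v = 0 := by
    simpa [dotProduct] using (dotProduct_mulVec 1 A x).trans (by rw [hA, zero_dotProduct])
  have hsucc (i : Fin n) : (A *ᵥ x) i.succ = 0 := congrFun hx i
  rw [Fin.sum_univ_succ] at hsum
  ext v
  cases v using Fin.cases with
  | zero => simpa [hsucc] using hsum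
  | succ i => exact hsucc i

theorem surjective_toLin'_submatrix_succ {A : Matrix (Fin (n + 1)) m R}
    (hA : ∀ v, Pi.single v 1 - Pi.single 0 1 ∈ LinearMap.range (toLin' A)) :
    Function.Surjective (toLin' (A.submatrix Fin.succ id)) := by
  rw [← LinearMap.range_eq_top, eq_top_iff, ← (Pi.basisFun R (Fin n)).span_eq, Submodule.span_le]
  rintro _ ⟨i, rfl⟩
  obtain ⟨x, hx⟩ := hA i.succ
  refine ⟨x, ?_⟩
  rw [toLin'_apply] at hx
  rw [toLin'_apply, submatrix_succ_mulVec, hx, Pi.basisFun_apply]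
  ext j
  simp [Pi.single_apply, Fin.succ_ne_zero]

end ReducedMatrix

theorem stmt_11_general (n m g : ℕ) (G : SimpleGraph (Fin (n + 1))) (hG : G.Connected)
    (head tail : Fin m → Fin (n + 1))
    (hadj : ∀ k, G.Adj (head k) (tail k))
    (hsurj : ∀ e ∈ G.edgeSet, ∃ k, s(head k, tail k) = e)
    (del : Matrix (Fin (n + 1)) (Fin m) ℤ)
    (hdel : ∀ v k, del v k = if v = head k then 1 else if v = tail k then -1 else 0)
    (delRed : Matrix (Fin n) (Fin m) ℤ)
    (hdelRed : ∀ i k, delRed i k = del i.succ k)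
    (iota : Matrix (Fin m) (Fin g) ℤ)
    (hli : LinearIndependent ℤ iota.transpose)
    (hspan : Submodule.span ℤ (Set.range iota.transpose) = LinearMap.ker (Matrix.toLin' del)) :
    Nonempty (((Fin n → ℤ) ⧸ LinearMap.range (Matrix.toLin' (delRed * delRed.transpose))) ≃+
      ((Fin g → ℤ) ⧸ LinearMap.range (Matrix.toLin' (iota.transpose * iota)))) := by
  obtain rfl : del = incidenceMatrix ℤ head tail := Matrix.ext hdel
  obtain rfl : delRed = (incidenceMatrix ℤ head tail).submatrix Fin.succ id := Matrix.ext hdelRed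
  have hsurjD : Function.Surjective
      (toLin' ((incidenceMatrix ℤ head tail).submatrix Fin.succ id)) :=
    surjective_toLin'_submatrix_succ fun v =>
      single_sub_single_mem_range_incidenceMatrix hadj hsurj (hG.preconnected v 0)
  have hexact : LinearMap.ker (toLin' ((incidenceMatrix ℤ head tail).submatrix Fin.succ id)) =
      LinearMap.range (toLin' iota) := by
    rw [ker_toLin'_submatrix_succ (one_vecMul_incidenceMatrix fun k => (hadj k).ne), ← hspan,
      range_toLin']
    rfl
  obtain ⟨S, T, hsplit⟩ := exists_isSplitExact hsurjD (mulVec_injective_iff.2 hli) hexact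
  exact ⟨hsplit.cokernelEquiv.toAddEquiv⟩

/-- For a connected simple graph `G` on vertices `{0, …, n}` with reduced incidence
matrix `∂̃` (delete the row of vertex `0`) and `ι` a matrix whose columns form a
`ℤ`-basis of `Flow(G) = ℤ^m ∩ ker ∂`, the cokernels `ℤ^n / im(∂̃ ∂̃ᵀ)` (the critical
group) and `ℤ^g / im(ιᵀι)` are isomorphic abelian groups. -/
theorem stmt_11 (n m g : ℕ) (G : SimpleGraph (Fin (n + 1))) (hG : G.Connected)
    (hg : m = n + g)
    (head tail : Fin m → Fin (n + 1))
    (hadj : ∀ k, G.Adj (head k) (tail k))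
    (hinj : Function.Injective fun k => s(head k, tail k))
    (hsurj : ∀ e ∈ G.edgeSet, ∃ k, s(head k, tail k) = e)
    (del : Matrix (Fin (n + 1)) (Fin m) ℤ)
    (hdel : ∀ v k, del v k = if v = head k then 1 else if v = tail k then -1 else 0)
    (delRed : Matrix (Fin n) (Fin m) ℤ)
    (hdelRed : ∀ i k, delRed i k = del i.succ k)
    (iota : Matrix (Fin m) (Fin g) ℤ)
    (hli : LinearIndependent ℤ iota.transpose)
    (hspan : Submodule.span ℤ (Set.range iota.transpose) = LinearMap.ker (Matrix.toLin' del)) :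
    Nonempty (((Fin n → ℤ) ⧸ LinearMap.range (Matrix.toLin' (delRed * delRed.transpose))) ≃+
      ((Fin g → ℤ) ⧸ LinearMap.range (Matrix.toLin' (iota.transpose * iota)))) :=
  stmt_11_general n m g G hG head tail hadj hsurj del hdel delRed hdelRed iota hli hspan
end
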